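/- For every band B of A and every chamber C ∈ ch(A) with C ⊆ B, the sets Sep(U_1(B), C) and Sep(U_2(B), C) are disjoint and their union equals Sep(U_1(B), U_2(B)). -/

import Mathlib

open scoped Classical

noncomputable section

abbrev Pt : Type := ℝ × ℝ

/-- An affine-linear functional `a*x + b*y + c` on `ℝ²` with nonzero linear part. -/
structure AffForm : Type where
  a : ℝ
  b : ℝ
  c : ℝ
  nondeg : a ≠ 0 ∨ b ≠ 0

namespace AffForm

def eval (f : AffForm) (p : Pt) : ℝ := f.a * p.1 + f.b * p.2 + f.c

def line (f : AffForm) : Set Pt := {p | f.eval p = 0}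

def Parallel (f g : AffForm) : Prop := f.a * g.b = f.b * g.a

end AffForm

variable {n : ℕ}

/-- An arrangement: at least two distinct affine lines, not all parallel. -/
def IsArrangement (α : Fin n → AffForm) : Prop :=
  2 ≤ n ∧ (∀ i j : Fin n, i ≠ j → (α i).line ≠ (α j).line) ∧
    ∃ i j : Fin n, ¬ (α i).Parallel (α j)

def complement (α : Fin n → AffForm) : Set Pt := {p | ∀ i, (α i).eval p ≠ 0}

/-- A chamber: a connected component of the complement of the union of the lines. -/
def IsChamber (α : Fin n → AffForm) (C : Set Pt) : Prop :=
  ∃ p ∈ complement α, C = connectedComponentIn (complement α) p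

/-- `Sep(C, C')`: the set of indices `i` such that `α i` is positive on one of `C, C'`
and negative on the other. -/
def SepSet (α : Fin n → AffForm) (C C' : Set Pt) : Finset (Fin n) :=
  Finset.univ.filter fun i =>
    ((∀ p ∈ C, 0 < (α i).eval p) ∧ (∀ p ∈ C', (α i).eval p < 0)) ∨
    ((∀ p ∈ C, (α i).eval p < 0) ∧ (∀ p ∈ C', 0 < (α i).eval p))

/-- `Δ(C, C') = ∏_{i ∈ Sep(C,C')} r i − ∏_{i ∈ Sep(C,C')} (r i)⁻¹`. -/
def Delta (α : Fin n → AffForm) (r : Fin n → ℂ) (C C' : Set Pt) : ℂ :=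
  (∏ i ∈ SepSet α C C', r i) - ∏ i ∈ SepSet α C C', (r i)⁻¹

/-- The open strip between two parallel lines `f.line` and `g.line`. -/
def Strip (f g : AffForm) : Set Pt :=
  {p | ∀ q ∈ g.line,
    (0 < f.eval p ∧ f.eval p < f.eval q) ∨ (f.eval q < f.eval p ∧ f.eval p < 0)}

/-- A band: the open strip between two parallel lines of the arrangement containing no
other line of the arrangement parallel to them. -/
def IsBand (α : Fin n → AffForm) (B : Set Pt) : Prop :=
  ∃ i j : Fin n, i ≠ j ∧ (α i).Parallel (α j) ∧ B = Strip (α i) (α j) ∧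
    ∀ k : Fin n, (α k).Parallel (α i) → (α k).line ∩ B = ∅

/-- The data of a band `B` bounded by the parallel lines `H i` and `H j`, together with its
two unbounded chambers `U1` (= `U_1(B)`) and `U2` (= `U_2(B)`). -/
def BandData (α : Fin n → AffForm) (i j : Fin n) (B U1 U2 : Set Pt) : Prop :=
  i ≠ j ∧ (α i).Parallel (α j) ∧ B = Strip (α i) (α j) ∧
  (∀ k : Fin n, (α k).Parallel (α i) → (α k).line ∩ B = ∅) ∧
  IsChamber α U1 ∧ IsChamber α U2 ∧ U1 ⊆ B ∧ U2 ⊆ B ∧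
  ¬ Bornology.IsBounded U1 ∧ ¬ Bornology.IsBounded U2 ∧ U1 ≠ U2

/-!
Every chamber lies on one side of each line, so `k ∈ Sep(C, C')` says that `α k` has different
signs on `C` and `C'`, and the claim reduces to: a line on which `U₁` and `U₂` have the same sign
has that sign on `C` too. A line parallel to the band does not meet it and the band is convex, so
such a line has one sign on the whole band. Every other line crosses the band in a bounded
segment; beyond all these segments the band ends in two convex pieces missing every line, each
therefore inside one chamber. The distinct unbounded chambers `U₁`, `U₂` reach opposite ends, where
a transverse line has opposite signs, so transverse lines always separate `U₁` from `U₂`.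
-/

namespace AffForm

theorem continuous_eval (f : AffForm) : Continuous f.eval := by
  unfold eval; fun_prop

theorem normSq_pos (f : AffForm) : 0 < f.a ^ 2 + f.b ^ 2 := by
  rcases f.nondeg with h | h <;> positivity

theorem line_nonempty (f : AffForm) : f.line.Nonempty := by
  rcases f.nondeg with h | h
  · exact ⟨(-f.c / f.a, 0), by simp [line, eval]; field_simp; ring⟩
  · exact ⟨(0, -f.c / f.b), by simp [line, eval]; field_simp; ring⟩

theorem eval_add_smul {f : AffForm} {x y : Pt} {a b : ℝ} (hab : a + b = 1) :
    f.eval (a • x + b • y) = a * f.eval x + b * f.eval y := by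
  simp only [eval, Prod.fst_add, Prod.snd_add, Prod.smul_fst, Prod.smul_snd, smul_eq_mul]
  linear_combination (-f.c) * hab

theorem convex_preimage_eval (f : AffForm) {s : Set ℝ} (hs : Convex ℝ s) :
    Convex ℝ (f.eval ⁻¹' s) := fun _ hx _ hy _ _ ha hb hab => by
  simpa only [Set.mem_preimage, eval_add_smul hab, smul_eq_mul] using hs hx hy ha hb hab

theorem pos_iff_pos_of_isPreconnected (f : AffForm) {S : Set Pt} (hS : IsPreconnected S)
    (hS0 : ∀ p ∈ S, f.eval p ≠ 0) {p q : Pt} (hp : p ∈ S) (hq : q ∈ S) :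
    0 < f.eval p ↔ 0 < f.eval q := by
  suffices key : ∀ p ∈ S, ∀ q ∈ S, 0 < f.eval p → 0 < f.eval q from
    ⟨key p hp q hq, key q hq p hp⟩
  intro p hp q hq hpos
  by_contra! hneg
  obtain ⟨r, hr, hr0⟩ :=
    hS.intermediate_value hq hp f.continuous_eval.continuousOn ⟨hneg, hpos.le⟩
  exact hS0 r hr hr0

theorem eval_ne_zero_of_line_inter_eq_empty {h : AffForm} {S : Set Pt}
    (hS : h.line ∩ S = ∅) : ∀ p ∈ S, h.eval p ≠ 0 :=
  fun p hp h0 => Set.eq_empty_iff_forall_notMem.1 hS p ⟨h0, hp⟩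

/-- A coordinate along the lines parallel to `f.line`. -/
def rotate (f : AffForm) : AffForm :=
  ⟨-f.b, f.a, 0, f.nondeg.symm.imp neg_ne_zero.mpr id⟩

def det (f g : AffForm) : ℝ := f.a * g.b - f.b * g.a

theorem det_ne_zero_of_not_parallel {f g : AffForm} (h : ¬ g.Parallel f) : f.det g ≠ 0 := by
  unfold Parallel at h; unfold det; intro h'; apply h; linarith

theorem exists_le_abs_rotate_eval {f : AffForm} {U : Set Pt} {K : ℝ}
    (hK : ∀ p ∈ U, |f.eval p| ≤ K) (hU : ¬ Bornology.IsBounded U) (T : ℝ) :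
    ∃ p ∈ U, T ≤ |f.rotate.eval p| := by
  by_contra! hT
  apply hU
  have hN := f.normSq_pos.ne'
  -- inverse of the affine coordinates `p ↦ (f.eval p, f.rotate.eval p)`
  let coords : ℝ × ℝ → Pt := fun x =>
    ((f.a * (x.1 - f.c) - f.b * x.2) / (f.a ^ 2 + f.b ^ 2),
      (f.b * (x.1 - f.c) + f.a * x.2) / (f.a ^ 2 + f.b ^ 2))
  have hbox : IsCompact (Set.Icc (-K) K ×ˢ Set.Icc (-T) T) := isCompact_Icc.prod isCompact_Icc
  refine ((hbox.image (by fun_prop : Continuous coords)).isBounded).subset fun p hp => ?_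
  refine ⟨(f.eval p, f.rotate.eval p),
    ⟨abs_le.mp (hK p hp), abs_le.mp (hT p hp).le⟩, ?_⟩
  simp only [coords, eval, rotate]
  ext <;> field_simp <;> ring

/-- Far out along the strip `|f| ≤ K`, the sign of `h` is that of `f.det h * f.rotate`, hence
opposite at the two ends. -/
theorem eventually_pos_det_mul_rotate_mul_eval {f h : AffForm} (hfh : ¬ h.Parallel f) (K : ℝ) :
    ∀ᶠ T in Filter.atTop, ∀ p, |f.eval p| ≤ K → T ≤ |f.rotate.eval p| →
      0 < f.det h * f.rotate.eval p * h.eval p := by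
  set D := f.det h
  have hD : 0 < |D| := abs_pos.mpr (det_ne_zero_of_not_parallel hfh)
  set e := h.a * f.a + h.b * f.b
  set M := |e| * (K + |f.c|) + (f.a ^ 2 + f.b ^ 2) * |h.c|
  filter_upwards [Filter.eventually_ge_atTop ((M + 1) / |D|)] with T hT p hpK hpT
  set t := f.rotate.eval p
  set A := e * (f.eval p - f.c) + (f.a ^ 2 + f.b ^ 2) * h.c
  -- `h` in the coordinates `(f, f.rotate)`
  have hdecomp : (f.a ^ 2 + f.b ^ 2) * (D * t * h.eval p) = (D * t) ^ 2 + D * t * A := by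
    simp only [D, t, A, e, det, rotate, eval]; ring
  have hA : |A| ≤ M := by
    calc |A| ≤ |e * (f.eval p - f.c)| + |(f.a ^ 2 + f.b ^ 2) * h.c| := abs_add_le _ _
      _ ≤ M := by
        rw [abs_mul, abs_mul, abs_of_pos f.normSq_pos]
        simp only [M]
        gcongr
        exact (abs_sub _ _).trans (by gcongr)
  have hDt : M < |D * t| := by
    rw [abs_mul]
    calc M < |D| * ((M + 1) / |D|) := by rw [mul_div_cancel₀ _ hD.ne']; linarith
      _ ≤ |D| * |t| := by gcongr; exact hT.trans hpT
  have hcross : -(|D * t| * |A|) ≤ D * t * A := by rw [← abs_mul]; exact neg_abs_le _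
  refine pos_of_mul_pos_right (hdecomp ▸ ?_) f.normSq_pos.le
  nlinarith [sq_abs (D * t), mul_le_mul_of_nonneg_left hA (abs_nonneg (D * t)), abs_nonneg A]

end AffForm

theorem convex_Ioo_union_Ioo (a : ℝ) : Convex ℝ (Set.Ioo 0 a ∪ Set.Ioo a 0) := by
  rcases le_total 0 a with h | h
  · rw [Set.Ioo_eq_empty h.not_gt, Set.union_empty]; exact convex_Ioo 0 a
  · rw [Set.Ioo_eq_empty h.not_gt, Set.empty_union]; exact convex_Ioo a 0

theorem convex_strip (f g : AffForm) : Convex ℝ (Strip f g) := by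
  have hStrip : Strip f g =
      ⋂ q ∈ g.line, f.eval ⁻¹' (Set.Ioo 0 (f.eval q) ∪ Set.Ioo (f.eval q) 0) := by
    ext p
    simp [Strip]
  rw [hStrip]
  exact convex_iInter₂ fun q _ => f.convex_preimage_eval (convex_Ioo_union_Ioo _)

theorem abs_eval_le_of_mem_strip {f g : AffForm} {p q : Pt} (hp : p ∈ Strip f g)
    (hq : q ∈ g.line) : |f.eval p| ≤ |f.eval q| := by
  rcases hp q hq with ⟨h0, h1⟩ | ⟨h0, h1⟩
  · rw [abs_of_pos h0, abs_of_pos (h0.trans h1)]; exact h1.le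
  · rw [abs_of_neg h1, abs_of_neg (h0.trans h1)]; linarith

section Chambers

variable {α : Fin n → AffForm} {C C' : Set Pt} {p p' : Pt}

theorem IsChamber.nonempty (hC : IsChamber α C) : C.Nonempty := by
  obtain ⟨p, hp, rfl⟩ := hC
  exact ⟨p, mem_connectedComponentIn hp⟩

theorem IsChamber.subset_complement (hC : IsChamber α C) : C ⊆ complement α := by
  obtain ⟨p, -, rfl⟩ := hC
  exact connectedComponentIn_subset _ _

theorem IsChamber.isPreconnected (hC : IsChamber α C) : IsPreconnected C := by
  obtain ⟨p, -, rfl⟩ := hC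
  exact isPreconnected_connectedComponentIn

theorem IsChamber.eq_of_mem (hC : IsChamber α C) (hC' : IsChamber α C') (hp : p ∈ C)
    (hp' : p ∈ C') : C = C' := by
  obtain ⟨q, -, rfl⟩ := hC
  obtain ⟨q', -, rfl⟩ := hC'
  rw [connectedComponentIn_eq hp, connectedComponentIn_eq hp']

theorem IsChamber.subset_of_isPreconnected (hC : IsChamber α C) {S : Set Pt}
    (hS : IsPreconnected S) (hSc : S ⊆ complement α) (hpS : p ∈ S) (hpC : p ∈ C) : S ⊆ C := by
  obtain ⟨q, -, rfl⟩ := hC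
  rw [connectedComponentIn_eq hpC]
  exact hS.subset_connectedComponentIn hpS hSc

theorem IsChamber.pos_iff_pos (hC : IsChamber α C) (k : Fin n) (hp : p ∈ C) (hp' : p' ∈ C) :
    0 < (α k).eval p ↔ 0 < (α k).eval p' :=
  (α k).pos_iff_pos_of_isPreconnected hC.isPreconnected
    (fun _ hq => hC.subset_complement hq k) hp hp'

theorem IsChamber.forall_pos_iff (hC : IsChamber α C) (k : Fin n) (hp : p ∈ C) :
    (∀ q ∈ C, 0 < (α k).eval q) ↔ 0 < (α k).eval p :=
  ⟨fun h => h p hp, fun h _ hq => (hC.pos_iff_pos k hp hq).1 h⟩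

theorem IsChamber.forall_neg_iff (hC : IsChamber α C) (k : Fin n) (hp : p ∈ C) :
    (∀ q ∈ C, (α k).eval q < 0) ↔ ¬ 0 < (α k).eval p :=
  ⟨fun h => (h p hp).not_gt, fun h _ hq =>
    lt_of_le_of_ne (not_lt.1 (mt (hC.pos_iff_pos k hq hp).1 h)) (hC.subset_complement hq k)⟩

theorem mem_sepSet_iff (hC : IsChamber α C) (hC' : IsChamber α C') (hp : p ∈ C) (hp' : p' ∈ C')
    (k : Fin n) : k ∈ SepSet α C C' ↔ ¬ (0 < (α k).eval p ↔ 0 < (α k).eval p') := by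
  simp only [SepSet, Finset.mem_filter, Finset.mem_univ, true_and, hC.forall_pos_iff k hp,
    hC'.forall_pos_iff k hp', hC.forall_neg_iff k hp, hC'.forall_neg_iff k hp']
  tauto

/-- With signs in place of chambers this is the identity `a ≠ c ⊻ b ≠ c ↔ a ≠ b`, as soon as
`a = b` forces `c = a`. -/
theorem disjoint_sepSet_and_union_eq {U1 U2 : Set Pt} {p1 p2 : Pt} (hU1 : IsChamber α U1)
    (hU2 : IsChamber α U2) (hC : IsChamber α C) (hp1 : p1 ∈ U1) (hp2 : p2 ∈ U2) (hp : p ∈ C)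
    (h : ∀ k, (0 < (α k).eval p1 ↔ 0 < (α k).eval p2) → (0 < (α k).eval p1 ↔ 0 < (α k).eval p)) :
    Disjoint (SepSet α U1 C) (SepSet α U2 C) ∧
      SepSet α U1 C ∪ SepSet α U2 C = SepSet α U1 U2 := by
  constructor
  · refine Finset.disjoint_left.2 fun k hk1 hk2 => ?_
    rw [mem_sepSet_iff hU1 hC hp1 hp] at hk1
    rw [mem_sepSet_iff hU2 hC hp2 hp] at hk2
    have := h k
    tauto
  · ext k
    rw [Finset.mem_union, mem_sepSet_iff hU1 hC hp1 hp, mem_sepSet_iff hU2 hC hp2 hp,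
      mem_sepSet_iff hU1 hU2 hp1 hp2]
    have := h k
    tauto

end Chambers

theorem exists_far_threshold (α : Fin n → AffForm) (f : AffForm) (K : ℝ) :
    ∃ T, 0 < T ∧ ∀ k, ¬ (α k).Parallel f → ∀ p, |f.eval p| ≤ K → T ≤ |f.rotate.eval p| →
      0 < f.det (α k) * f.rotate.eval p * (α k).eval p := by
  have hfar : ∀ k, ∀ᶠ T in Filter.atTop, ¬ (α k).Parallel f → ∀ p, |f.eval p| ≤ K →
      T ≤ |f.rotate.eval p| → 0 < f.det (α k) * f.rotate.eval p * (α k).eval p := by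
    intro k
    by_cases hk : (α k).Parallel f
    · exact .of_forall fun _ h => absurd hk h
    · exact (AffForm.eventually_pos_det_mul_rotate_mul_eval hk K).mono fun _ h _ => h
  exact ((Filter.eventually_gt_atTop 0).and (Filter.eventually_all.2 hfar)).exists

section Band

variable {α : Fin n → AffForm} {f : AffForm} {B U1 U2 : Set Pt} {K : ℝ}

theorem not_pos_iff_pos_of_not_parallel (hBc : Convex ℝ B) (hK : ∀ p ∈ B, |f.eval p| ≤ K)
    (hpar : ∀ k, (α k).Parallel f → (α k).line ∩ B = ∅) (hU1 : IsChamber α U1)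
    (hU2 : IsChamber α U2) (hU1B : U1 ⊆ B) (hU2B : U2 ⊆ B) (hU1b : ¬ Bornology.IsBounded U1)
    (hU2b : ¬ Bornology.IsBounded U2) (hU12 : U1 ≠ U2) {k : Fin n} (hk : ¬ (α k).Parallel f)
    {p1 p2 : Pt} (hp1 : p1 ∈ U1) (hp2 : p2 ∈ U2) :
    ¬ (0 < (α k).eval p1 ↔ 0 < (α k).eval p2) := by
  obtain ⟨T, hT0, hT⟩ := exists_far_threshold α f K
  have hfar : ∀ p ∈ B, T ≤ |f.rotate.eval p| → p ∈ complement α := by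
    intro p hp hpT l hl0
    by_cases hl : (α l).Parallel f
    · exact (α l).eval_ne_zero_of_line_inter_eq_empty (hpar l hl) p hp hl0
    · simpa [hl0] using hT l hl p (hK p hp) hpT
  -- each end of `B` is convex and misses all lines, so lies in a single chamber
  have hends : ∀ s : Set ℝ, Convex ℝ s → (∀ x ∈ s, T ≤ |x|) → ∀ q1 ∈ U1, ∀ q2 ∈ U2,
      f.rotate.eval q1 ∈ s → f.rotate.eval q2 ∈ s → False := by
    intro s hs hsT q1 hq1 q2 hq2 h1 h2
    have hE := (hBc.inter (f.rotate.convex_preimage_eval hs)).isPreconnected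
    have hEc : B ∩ f.rotate.eval ⁻¹' s ⊆ complement α := fun p hp => hfar p hp.1 (hsT _ hp.2)
    exact hU12 (hU1.eq_of_mem hU2 hq1
      (hU2.subset_of_isPreconnected hE hEc ⟨hU2B hq2, h2⟩ hq2 ⟨hU1B hq1, h1⟩))
  obtain ⟨q1, hq1, hq1T⟩ := AffForm.exists_le_abs_rotate_eval (fun p hp => hK p (hU1B hp)) hU1b T
  obtain ⟨q2, hq2, hq2T⟩ := AffForm.exists_le_abs_rotate_eval (fun p hp => hK p (hU2B hp)) hU2b T
  have hopp : f.rotate.eval q1 * f.rotate.eval q2 < 0 := by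
    rcases le_abs'.1 hq1T with h1 | h1 <;> rcases le_abs'.1 hq2T with h2 | h2
    · exact (hends (Set.Iic (-T)) (convex_Iic _) (fun x hx => le_abs'.2 (.inl hx))
        q1 hq1 q2 hq2 h1 h2).elim
    · nlinarith
    · nlinarith
    · exact (hends (Set.Ici T) (convex_Ici _) (fun x hx => le_abs'.2 (.inr hx))
        q1 hq1 q2 hq2 h1 h2).elim
  have h1 := hT k hk q1 (hK q1 (hU1B hq1)) hq1T
  have h2 := hT k hk q2 (hK q2 (hU2B hq2)) hq2T
  have hsign : (α k).eval q1 * (α k).eval q2 < 0 := by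
    have hprod : 0 < (f.rotate.eval q1 * f.rotate.eval q2) *
        (f.det (α k) ^ 2 * ((α k).eval q1 * (α k).eval q2)) := by
      linarith [mul_pos h1 h2]
    exact neg_of_mul_neg_right (neg_of_mul_pos_right hprod hopp.le) (sq_nonneg _)
  rw [hU1.pos_iff_pos k hp1 hq1, hU2.pos_iff_pos k hp2 hq2]
  rcases mul_neg_iff.1 hsign with ⟨ha, hb⟩ | ⟨ha, hb⟩
  · simp [ha, hb.le]
  · simp [ha.le, hb]

end Band

theorem statement2_general {n : ℕ} (α : Fin n → AffForm)
    (i j : Fin n) (B U1 U2 : Set Pt) (hB : BandData α i j B U1 U2)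
    (C : Set Pt) (hC : IsChamber α C) (hCB : C ⊆ B) :
    Disjoint (SepSet α U1 C) (SepSet α U2 C) ∧
    SepSet α U1 C ∪ SepSet α U2 C = SepSet α U1 U2 := by
  obtain ⟨-, -, rfl, hpar, hU1, hU2, hU1B, hU2B, hU1b, hU2b, hU12⟩ := hB
  obtain ⟨q, hq⟩ := (α j).line_nonempty
  have hconv := convex_strip (α i) (α j)
  have hK : ∀ p ∈ Strip (α i) (α j), |(α i).eval p| ≤ |(α i).eval q| :=
    fun p hp => abs_eval_le_of_mem_strip hp hq
  obtain ⟨p1, hp1⟩ := hU1.nonempty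
  obtain ⟨p2, hp2⟩ := hU2.nonempty
  obtain ⟨c, hc⟩ := hC.nonempty
  refine disjoint_sepSet_and_union_eq hU1 hU2 hC hp1 hp2 hc fun k hk12 => ?_
  by_cases hk : (α k).Parallel (α i)
  · exact (α k).pos_iff_pos_of_isPreconnected hconv.isPreconnected
      ((α k).eval_ne_zero_of_line_inter_eq_empty (hpar k hk)) (hU1B hp1) (hCB hc)
  · exact absurd hk12 (not_pos_iff_pos_of_not_parallel hconv hK hpar hU1 hU2 hU1B hU2B hU1b
      hU2b hU12 hk hp1 hp2)

/-- For every band `B` of `A` and every chamber `C` with `C ⊆ B`, the sets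
`Sep(U_1(B), C)` and `Sep(U_2(B), C)` are disjoint and their union equals
`Sep(U_1(B), U_2(B))`. -/
theorem statement2 {n : ℕ} (α : Fin n → AffForm) (hA : IsArrangement α)
    (i j : Fin n) (B U1 U2 : Set Pt) (hB : BandData α i j B U1 U2)
    (C : Set Pt) (hC : IsChamber α C) (hCB : C ⊆ B) :
    Disjoint (SepSet α U1 C) (SepSet α U2 C) ∧
    SepSet α U1 C ∪ SepSet α U2 C = SepSet α U1 U2 :=
  statement2_general α i j B U1 U2 hB C hC hCB

end
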